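/- arXiv:math/0609355 — 2 statements merged into one kernel-verified Lean document; each statement's English description precedes it below -/
import Mathlib

section
/- Let L be a (−1)-class in the del Pezzo lattice of rank 9 (δ = 8), and let λ₁, λ₂, λ₃ be (−1)-classes with λ₁ + λ₂ + λ₃ = −2K + L. Then the multiset {λ₁·L, λ₂·L, λ₃·L} is one of the four multisets {3, −1, −1}, {2, 0, −1}, {1, 1, −1}, {1, 0, 0}; and conversely, each of these four multisets is attained by some such triple of (−1)-classes. -/
/-- A class in the del Pezzo lattice of rank `1 + δ`: the pair `(a, b)`
represents `a·ℓ − b₁e₁ − ⋯ − b_δ e_δ`. -/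
abbrev Cls (δ : ℕ) : Type := ℤ × (Fin δ → ℤ)

/-- The intersection product: `(a;b)·(a';b') = a a' − Σ bᵢ bᵢ'`. -/
def ip {δ : ℕ} (x y : Cls δ) : ℤ := x.1 * y.1 - ∑ i, x.2 i * y.2 i

/-- The canonical class `K = −3ℓ + e₁ + ⋯ + e_δ`, i.e. `(−3; −1, …, −1)`. -/
def Kcls (δ : ℕ) : Cls δ := (-3, fun _ => -1)

/-- A conic class: `Q·Q = 0` and `K·Q = −2`. -/
def IsConic {δ : ℕ} (Q : Cls δ) : Prop := ip Q Q = 0 ∧ ip (Kcls δ) Q = -2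

/-- A `(−1)`-class: `L·L = −1` and `K·L = −1`. -/
def IsMinusOne {δ : ℕ} (L : Cls δ) : Prop := ip L L = -1 ∧ ip (Kcls δ) L = -1

/-- Membership in the Weyl group `W_δ`: a ℤ-linear automorphism of the lattice
preserving the intersection form and fixing the canonical class. -/
def IsWeyl {δ : ℕ} (g : Cls δ ≃ₗ[ℤ] Cls δ) : Prop :=
  (∀ x y : Cls δ, ip (g x) (g y) = ip x y) ∧ g (Kcls δ) = Kcls δ

/-- The four possible multisets of intersection numbers. -/
def tripleTargets : List (Multiset ℤ) :=
  [{3, -1, -1}, {2, 0, -1}, {1, 1, -1}, {1, 0, 0}]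

lemma ip_comm {δ : ℕ} (x y : Cls δ) : ip x y = ip y x := by simp [ip, mul_comm]

lemma ip_add_left {δ : ℕ} (x y z : Cls δ) : ip (x + y) z = ip x z + ip y z := by
  simp only [ip, Prod.fst_add, Prod.snd_add, Pi.add_apply, add_mul]
  rw [Finset.sum_add_distrib]; ring

lemma ip_smul_left {δ : ℕ} (c : ℤ) (x z : Cls δ) : ip (c • x) z = c * ip x z := by
  simp only [ip, Prod.smul_fst, Prod.smul_snd, Pi.smul_apply, smul_eq_mul, mul_assoc]
  rw [← Finset.mul_sum]; ring

lemma ip_add_right {δ : ℕ} (x y z : Cls δ) : ip z (x + y) = ip z x + ip z y := by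
  rw [ip_comm, ip_add_left, ip_comm x z, ip_comm y z]

lemma ip_smul_right {δ : ℕ} (c : ℤ) (x z : Cls δ) : ip z (c • x) = c * ip z x := by
  rw [ip_comm, ip_smul_left, ip_comm]

def IsRoot (v : Cls 8) : Prop := ip v v = -2 ∧ ip (Kcls 8) v = 0

def HasUS (L : Cls 8) : Prop :=
  ∃ u s : Cls 8, IsRoot u ∧ IsRoot s ∧ ip u L = 0 ∧ ip s L = 1 ∧ ip u s = 1

def pact (σ : Equiv.Perm (Fin 8)) (x : Cls 8) : Cls 8 := (x.1, x.2 ∘ σ)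

lemma ip_pact (σ : Equiv.Perm (Fin 8)) (x y : Cls 8) : ip (pact σ x) (pact σ y) = ip x y := by
  simp only [ip, pact, Function.comp_apply]
  rw [Equiv.sum_comp σ (fun i => x.2 i * y.2 i)]

lemma pact_K (σ : Equiv.Perm (Fin 8)) : pact σ (Kcls 8) = Kcls 8 := rfl

lemma pact_inv (σ : Equiv.Perm (Fin 8)) (x : Cls 8) : pact σ (pact σ⁻¹ x) = x := by
  unfold pact
  ext i
  · rfl
  · simp

lemma pact_mo (σ : Equiv.Perm (Fin 8)) {L : Cls 8} (h : IsMinusOne L) : IsMinusOne (pact σ L) :=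
  ⟨by rw [ip_pact]; exact h.1, by rw [← pact_K σ, ip_pact]; exact h.2⟩

lemma hasUS_pact (σ : Equiv.Perm (Fin 8)) (L : Cls 8) (h : HasUS (pact σ L)) : HasUS L := by
  obtain ⟨u, s, hu, hs, huL, hsL, hus⟩ := h
  refine ⟨pact σ⁻¹ u, pact σ⁻¹ s, ⟨?_, ?_⟩, ⟨?_, ?_⟩, ?_, ?_, ?_⟩
  · rw [ip_pact]; exact hu.1
  · rw [← pact_K σ⁻¹, ip_pact]; exact hu.2
  · rw [ip_pact]; exact hs.1
  · rw [← pact_K σ⁻¹, ip_pact]; exact hs.2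
  · rw [← ip_pact σ, pact_inv]; exact huL
  · rw [← ip_pact σ, pact_inv]; exact hsL
  · rw [ip_pact]; exact hus

def rv (v x : Cls 8) : Cls 8 := x + (ip x v) • v

lemma ip_rv (v x y : Cls 8) (hv : ip v v = -2) : ip (rv v x) (rv v y) = ip x y := by
  simp only [rv, ip_add_left, ip_add_right, ip_smul_left, ip_smul_right, hv]
  rw [ip_comm v y]
  ring

lemma rv_K (v x : Cls 8) (hv : ip (Kcls 8) v = 0) : ip (Kcls 8) (rv v x) = ip (Kcls 8) x := by
  simp only [rv, ip_add_right, ip_smul_right, hv]; ring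

lemma rv_invol (v x : Cls 8) (hv : ip v v = -2) : rv v (rv v x) = x := by
  have h1 : ip (rv v x) v = -(ip x v) := by
    simp only [rv, ip_add_left, ip_smul_left, hv]; ring
  show rv v x + ip (rv v x) v • v = x
  rw [h1]
  show x + ip x v • v + -ip x v • v = x
  rw [add_assoc, ← add_smul]
  simp

lemma rv_mo (v : Cls 8) {L : Cls 8} (hv : IsRoot v) (h : IsMinusOne L) : IsMinusOne (rv v L) :=
  ⟨by rw [ip_rv _ _ _ hv.1]; exact h.1, by rw [rv_K _ _ hv.2]; exact h.2⟩

lemma hasUS_rv (v L : Cls 8) (hv : IsRoot v) (h : HasUS (rv v L)) : HasUS L := by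
  obtain ⟨u, s, hu, hs, huL, hsL, hus⟩ := h
  have hLL : rv v (rv v L) = L := rv_invol v L hv.1
  refine ⟨rv v u, rv v s, ⟨?_, ?_⟩, ⟨?_, ?_⟩, ?_, ?_, ?_⟩
  · rw [ip_rv _ _ _ hv.1]; exact hu.1
  · rw [rv_K _ _ hv.2]; exact hu.2
  · rw [ip_rv _ _ _ hv.1]; exact hs.1
  · rw [rv_K _ _ hv.2]; exact hs.2
  · rw [← hLL, ip_rv _ _ _ hv.1]; exact huL
  · rw [← hLL, ip_rv _ _ _ hv.1]; exact hsL
  · rw [ip_rv _ _ _ hv.1]; exact hus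

lemma ipK {δ : ℕ} (x : Cls δ) : ip (Kcls δ) x = -3 * x.1 + ∑ i, x.2 i := by
  simp [ip, Kcls]

lemma cauchy8' (f : Fin 8 → ℤ) : (∑ i, f i) * (∑ i, f i) ≤ 8 * ∑ i, f i * f i := by
  simp only [Fin.sum_univ_eight]
  have key : 8 * (f 0*f 0 + f 1*f 1 + f 2*f 2 + f 3*f 3 + f 4*f 4 + f 5*f 5 + f 6*f 6 + f 7*f 7)
      - (f 0 + f 1 + f 2 + f 3 + f 4 + f 5 + f 6 + f 7)*(f 0 + f 1 + f 2 + f 3 + f 4 + f 5 + f 6 + f 7) =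
      (f 0 - f 1)^2 + (f 0 - f 2)^2 + (f 0 - f 3)^2 + (f 0 - f 4)^2 + (f 0 - f 5)^2
    + (f 0 - f 6)^2 + (f 0 - f 7)^2 + (f 1 - f 2)^2 + (f 1 - f 3)^2 + (f 1 - f 4)^2
    + (f 1 - f 5)^2 + (f 1 - f 6)^2 + (f 1 - f 7)^2 + (f 2 - f 3)^2 + (f 2 - f 4)^2
    + (f 2 - f 5)^2 + (f 2 - f 6)^2 + (f 2 - f 7)^2 + (f 3 - f 4)^2 + (f 3 - f 5)^2
    + (f 3 - f 6)^2 + (f 3 - f 7)^2 + (f 4 - f 5)^2 + (f 4 - f 6)^2 + (f 4 - f 7)^2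
    + (f 5 - f 6)^2 + (f 5 - f 7)^2 + (f 6 - f 7)^2 := by ring
  have pos : (0:ℤ) ≤ (f 0 - f 1)^2 + (f 0 - f 2)^2 + (f 0 - f 3)^2 + (f 0 - f 4)^2 + (f 0 - f 5)^2
    + (f 0 - f 6)^2 + (f 0 - f 7)^2 + (f 1 - f 2)^2 + (f 1 - f 3)^2 + (f 1 - f 4)^2
    + (f 1 - f 5)^2 + (f 1 - f 6)^2 + (f 1 - f 7)^2 + (f 2 - f 3)^2 + (f 2 - f 4)^2
    + (f 2 - f 5)^2 + (f 2 - f 6)^2 + (f 2 - f 7)^2 + (f 3 - f 4)^2 + (f 3 - f 5)^2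
    + (f 3 - f 6)^2 + (f 3 - f 7)^2 + (f 4 - f 5)^2 + (f 4 - f 6)^2 + (f 4 - f 7)^2
    + (f 5 - f 6)^2 + (f 5 - f 7)^2 + (f 6 - f 7)^2 := by positivity
  linarith

lemma negdef {x : Cls 8} (h : ip (Kcls 8) x = 0) : ip x x ≤ 0 := by
  obtain ⟨c, f⟩ := x
  rw [ipK] at h
  have hs : ∑ i, f i = 3 * c := by simp at h; linarith
  have hc := cauchy8' f
  rw [hs] at hc
  have h9 : (3*c)*(3*c) = 9 * (c*c) := by ring
  rw [h9] at hc
  have hcc : 0 ≤ c * c := mul_self_nonneg c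
  show c * c - ∑ i, f i * f i ≤ 0
  linarith

lemma negdef_zero {x : Cls 8} (h : ip (Kcls 8) x = 0) (h2 : ip x x = 0) : x = 0 := by
  obtain ⟨c, f⟩ := x
  rw [ipK] at h
  have hs : ∑ i, f i = 3 * c := by simp at h; linarith
  have hc := cauchy8' f
  rw [hs] at hc
  have h9 : (3*c)*(3*c) = 9 * (c*c) := by ring
  rw [h9] at hc
  have h2' : c * c - ∑ i, f i * f i = 0 := h2
  have hcc : 0 ≤ c * c := mul_self_nonneg c
  have hc0 : c = 0 := by nlinarith
  subst hc0
  have hfs : ∑ i, f i * f i = 0 := by linarith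
  have hf : ∀ i ∈ Finset.univ, f i = 0 := by
    intro i _
    have := (Finset.sum_eq_zero_iff_of_nonneg (fun j _ => mul_self_nonneg (f j))).mp hfs i (Finset.mem_univ i)
    exact mul_self_eq_zero.mp this
  have : f = 0 := funext fun i => hf i (Finset.mem_univ i)
  rw [this]
  rfl

lemma int_sq_add (z : ℤ) : 0 ≤ z * z + z := by
  have h := sq_nonneg (2*z+1)
  nlinarith

lemma sq_self_of01 (z : ℤ) (h0 : 0 ≤ z) (h1 : z ≤ 1) : z * z = z := by
  interval_cases z <;> ring

lemma mo_pair_le {L M : Cls 8} (hL : IsMinusOne L) (hM : IsMinusOne M) : -1 ≤ ip L M := by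
  have hK : ip (Kcls 8) (L + (-1:ℤ) • M) = 0 := by
    rw [ip_add_right, ip_smul_right, hL.2, hM.2]; ring
  have hx := negdef hK
  simp only [ip_add_left, ip_add_right, ip_smul_left, ip_smul_right] at hx
  rw [hL.1, hM.1, ip_comm M L] at hx
  linarith

lemma mo_pair_eq {L M : Cls 8} (hL : IsMinusOne L) (hM : IsMinusOne M)
    (h : ip L M = -1) : L = M := by
  have hK : ip (Kcls 8) (L + (-1:ℤ) • M) = 0 := by
    rw [ip_add_right, ip_smul_right, hL.2, hM.2]; ring
  have hx : ip (L + (-1:ℤ) • M) (L + (-1:ℤ) • M) = 0 := by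
    simp only [ip_add_left, ip_add_right, ip_smul_left, ip_smul_right]
    rw [hL.1, hM.1, ip_comm M L, h]; ring
  have h0 := negdef_zero hK hx
  have h1 : L - M = 0 := by
    have hm : L + (-1:ℤ) • M = L - M := by module
    rwa [hm] at h0
  exact sub_eq_zero.mp h1

lemma mo_sum {a : ℤ} {f : Fin 8 → ℤ} (h : IsMinusOne ((a, f) : Cls 8)) :
    ∑ i, f i = 3 * a - 1 := by
  have h2 := h.2
  rw [ipK] at h2
  simp only at h2
  linarith

lemma mo_sq {a : ℤ} {f : Fin 8 → ℤ} (h : IsMinusOne ((a, f) : Cls 8)) :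
    a * a - ∑ i, f i * f i = -1 := h.1

lemma mo_a_nonneg {L : Cls 8} (h : IsMinusOne L) : 0 ≤ L.1 := by
  obtain ⟨a, f⟩ := L
  have hs := mo_sum h
  have hq : a * a - ∑ i, f i * f i = -1 := mo_sq h
  have hc := cauchy8' f
  rw [hs] at hc
  have ha1 : -1 ≤ a := by nlinarith [sq_nonneg (a+1)]
  rcases lt_or_ge (-1 : ℤ) a with h' | h'
  · show 0 ≤ a; omega
  · exfalso
    have ha : a = -1 := le_antisymm h' ha1
    subst ha
    have hpos : (0:ℤ) ≤ ∑ i, (f i * f i + f i) := Finset.sum_nonneg fun i _ => int_sq_add (f i)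
    rw [Finset.sum_add_distrib] at hpos
    omega

def eCls (i : Fin 8) : Cls 8 := (0, fun j => if j = i then -1 else 0)

lemma eCls_mo (i : Fin 8) : IsMinusOne (eCls i) := by
  constructor
  · simp [ip, eCls, Finset.sum_ite_eq']
  · rw [ipK]
    simp [eCls, Finset.sum_ite_eq']

lemma ip_eCls (L : Cls 8) (i : Fin 8) : ip L (eCls i) = L.2 i := by
  simp [ip, eCls, mul_ite, Finset.sum_ite_eq']

lemma bcoord_nonneg {a : ℤ} {f : Fin 8 → ℤ} (h : IsMinusOne ((a, f) : Cls 8))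
    (ha : 1 ≤ a) (i : Fin 8) : 0 ≤ f i := by
  have hle0 := mo_pair_le h (eCls_mo i)
  rw [ip_eCls] at hle0
  have hle : (-1:ℤ) ≤ f i := hle0
  rcases lt_or_ge (-1:ℤ) (f i) with h' | h'
  · omega
  · exfalso
    have hfe : f i = -1 := by omega
    have heq := mo_pair_eq h (eCls_mo i) (by rw [ip_eCls]; exact hfe)
    have : a = 0 := congrArg Prod.fst heq
    omega

def w8 (c0 c1 c2 c3 c4 c5 c6 c7 : ℤ) : Fin 8 → ℤ := fun i =>
  if i = 0 then c0 else if i = 1 then c1 else if i = 2 then c2 else if i = 3 then c3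
  else if i = 4 then c4 else if i = 5 then c5 else if i = 6 then c6 else c7

lemma int_sq_sub (z : ℤ) : 0 ≤ z * z - z := by nlinarith [sq_nonneg (2*z-1)]

set_option maxHeartbeats 1000000 in
lemma hasUS_of_mo : ∀ L : Cls 8, IsMinusOne L → HasUS L := by
  suffices H : ∀ n : ℕ, ∀ L : Cls 8, IsMinusOne L → L.1.toNat = n → HasUS L by
    exact fun L hL => H L.1.toNat L hL rfl
  intro n
  induction n using Nat.strong_induction_on with
  | _ n IH =>
  rintro ⟨a, b⟩ hL hn
  have hn' : a.toNat = n := hn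
  have hmono0 : Monotone (b ∘ Tuple.sort b) := Tuple.monotone_sort b
  apply hasUS_pact (Tuple.sort b)
  obtain ⟨f, hfdef⟩ : ∃ f, b ∘ Tuple.sort b = f := ⟨_, rfl⟩
  have hpp : pact (Tuple.sort b) ((a, b) : Cls 8) = ((a, f) : Cls 8) := by
    rw [← hfdef]; rfl
  rw [hpp]
  rw [hfdef] at hmono0
  have hM : IsMinusOne ((a, f) : Cls 8) := by rw [← hpp]; exact pact_mo _ hL
  have hs := mo_sum hM
  have hq := mo_sq hM
  have ha0 : (0:ℤ) ≤ a := mo_a_nonneg hM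
  have m01 : f 0 ≤ f 1 := hmono0 (by decide : (0:Fin 8) ≤ 1)
  have m12 : f 1 ≤ f 2 := hmono0 (by decide : (1:Fin 8) ≤ 2)
  have m23 : f 2 ≤ f 3 := hmono0 (by decide : (2:Fin 8) ≤ 3)
  have m34 : f 3 ≤ f 4 := hmono0 (by decide : (3:Fin 8) ≤ 4)
  have m45 : f 4 ≤ f 5 := hmono0 (by decide : (4:Fin 8) ≤ 5)
  have m56 : f 5 ≤ f 6 := hmono0 (by decide : (5:Fin 8) ≤ 6)
  have m67 : f 6 ≤ f 7 := hmono0 (by decide : (6:Fin 8) ≤ 7)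
  simp only [Fin.sum_univ_eight] at hs hq
  rcases lt_or_ge a 2 with ha2 | ha2
  · interval_cases a
    · -- a = 0 : f = (-1,0,0,0,0,0,0,0)
      have t0 := int_sq_add (f 0); have t1 := int_sq_add (f 1); have t2 := int_sq_add (f 2)
      have t3 := int_sq_add (f 3); have t4 := int_sq_add (f 4); have t5 := int_sq_add (f 5)
      have t6 := int_sq_add (f 6); have t7 := int_sq_add (f 7)
      have e0 : f 0 * (f 0 + 1) = 0 := by linarith
      have e1 : f 1 * (f 1 + 1) = 0 := by linarith
      have e2 : f 2 * (f 2 + 1) = 0 := by linarith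
      have e3 : f 3 * (f 3 + 1) = 0 := by linarith
      have e4 : f 4 * (f 4 + 1) = 0 := by linarith
      have e5 : f 5 * (f 5 + 1) = 0 := by linarith
      have e6 : f 6 * (f 6 + 1) = 0 := by linarith
      have e7 : f 7 * (f 7 + 1) = 0 := by linarith
      have d0 := mul_eq_zero.mp e0; have d1 := mul_eq_zero.mp e1
      have d2 := mul_eq_zero.mp e2; have d3 := mul_eq_zero.mp e3
      have d4 := mul_eq_zero.mp e4; have d5 := mul_eq_zero.mp e5
      have d6 := mul_eq_zero.mp e6; have d7 := mul_eq_zero.mp e7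
      have v0 : f 0 = -1 := by omega
      have v1 : f 1 = 0 := by omega
      have v2 : f 2 = 0 := by omega
      have v3 : f 3 = 0 := by omega
      have v4 : f 4 = 0 := by omega
      have v5 : f 5 = 0 := by omega
      have v6 : f 6 = 0 := by omega
      have v7 : f 7 = 0 := by omega
      refine ⟨(0, w8 0 1 (-1) 0 0 0 0 0), (0, w8 1 (-1) 0 0 0 0 0 0),
        ⟨?_, ?_⟩, ⟨?_, ?_⟩, ?_, ?_, ?_⟩
      · simp [ip, w8, Fin.sum_univ_eight]
      · rw [ipK]; simp [w8, Fin.sum_univ_eight]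
      · simp [ip, w8, Fin.sum_univ_eight]
      · rw [ipK]; simp [w8, Fin.sum_univ_eight]
      · simp [ip, w8, Fin.sum_univ_eight, v0, v1, v2, v3, v4, v5, v6, v7]
      · simp [ip, w8, Fin.sum_univ_eight, v0, v1, v2, v3, v4, v5, v6, v7]
      · simp [ip, w8, Fin.sum_univ_eight]
    · -- a = 1 : f = (0,0,0,0,0,0,1,1)
      have t0 := int_sq_sub (f 0); have t1 := int_sq_sub (f 1); have t2 := int_sq_sub (f 2)
      have t3 := int_sq_sub (f 3); have t4 := int_sq_sub (f 4); have t5 := int_sq_sub (f 5)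
      have t6 := int_sq_sub (f 6); have t7 := int_sq_sub (f 7)
      have e0 : f 0 * (f 0 - 1) = 0 := by linarith
      have e1 : f 1 * (f 1 - 1) = 0 := by linarith
      have e2 : f 2 * (f 2 - 1) = 0 := by linarith
      have e3 : f 3 * (f 3 - 1) = 0 := by linarith
      have e4 : f 4 * (f 4 - 1) = 0 := by linarith
      have e5 : f 5 * (f 5 - 1) = 0 := by linarith
      have e6 : f 6 * (f 6 - 1) = 0 := by linarith
      have e7 : f 7 * (f 7 - 1) = 0 := by linarith
      have d0 := mul_eq_zero.mp e0; have d1 := mul_eq_zero.mp e1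
      have d2 := mul_eq_zero.mp e2; have d3 := mul_eq_zero.mp e3
      have d4 := mul_eq_zero.mp e4; have d5 := mul_eq_zero.mp e5
      have d6 := mul_eq_zero.mp e6; have d7 := mul_eq_zero.mp e7
      have v0 : f 0 = 0 := by omega
      have v1 : f 1 = 0 := by omega
      have v2 : f 2 = 0 := by omega
      have v3 : f 3 = 0 := by omega
      have v4 : f 4 = 0 := by omega
      have v5 : f 5 = 0 := by omega
      have v6 : f 6 = 1 := by omega
      have v7 : f 7 = 1 := by omega
      refine ⟨(0, w8 0 0 0 0 0 0 1 (-1)), (0, w8 1 0 0 0 0 0 (-1) 0),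
        ⟨?_, ?_⟩, ⟨?_, ?_⟩, ?_, ?_, ?_⟩
      · simp [ip, w8, Fin.sum_univ_eight]
      · rw [ipK]; simp [w8, Fin.sum_univ_eight]
      · simp [ip, w8, Fin.sum_univ_eight]
      · rw [ipK]; simp [w8, Fin.sum_univ_eight]
      · simp [ip, w8, Fin.sum_univ_eight, v0, v1, v2, v3, v4, v5, v6, v7]
      · simp [ip, w8, Fin.sum_univ_eight, v0, v1, v2, v3, v4, v5, v6, v7]
      · simp [ip, w8, Fin.sum_univ_eight]
  · -- a ≥ 2 : inductive step
    have hpos : ∀ i, 0 ≤ f i := bcoord_nonneg hM (by omega)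
    have claim : a + 1 ≤ f 5 + f 6 + f 7 := by
      by_contra hcl
      push_neg at hcl
      rcases lt_or_ge a 4 with ha4 | ha4
      · interval_cases a
        · -- a = 2
          have p0 := hpos 0; have p1 := hpos 1; have p2 := hpos 2
          have p3 := hpos 3; have p4 := hpos 4
          omega
        · -- a = 3
          have h5le : f 5 ≤ 1 := by linarith
          have h5ge : 1 ≤ f 5 := by linarith
          have h6 : f 6 = 1 := by linarith
          have h7 : f 7 = 1 := by linarith
          have q0 : f 0 * f 0 = f 0 := sq_self_of01 _ (hpos 0) (by linarith)
          have q1 : f 1 * f 1 = f 1 := sq_self_of01 _ (hpos 1) (by linarith)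
          have q2 : f 2 * f 2 = f 2 := sq_self_of01 _ (hpos 2) (by linarith)
          have q3 : f 3 * f 3 = f 3 := sq_self_of01 _ (hpos 3) (by linarith)
          have q4 : f 4 * f 4 = f 4 := sq_self_of01 _ (hpos 4) (by linarith)
          have q5 : f 5 * f 5 = f 5 := sq_self_of01 _ (hpos 5) h5le
          rw [h6, h7] at hq
          rw [q0, q1, q2, q3, q4, q5] at hq
          linarith
      · -- a ≥ 4
        linarith [hpos 0, hpos 1, hpos 2, hpos 3, hpos 4]
    have hvroot : IsRoot ((1, w8 0 0 0 0 0 1 1 1) : Cls 8) := by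
      constructor
      · simp [ip, w8, Fin.sum_univ_eight]
      · rw [ipK]; simp [w8, Fin.sum_univ_eight]
    have hipMv : ip ((a, f) : Cls 8) ((1, w8 0 0 0 0 0 1 1 1) : Cls 8)
        = a - (f 5 + f 6 + f 7) := by
      simp [ip, w8, Fin.sum_univ_eight]
    apply hasUS_rv ((1, w8 0 0 0 0 0 1 1 1) : Cls 8) _ hvroot
    have hM' : IsMinusOne (rv ((1, w8 0 0 0 0 0 1 1 1) : Cls 8) ((a, f) : Cls 8)) :=
      rv_mo _ hvroot hM
    have hM'a : (rv ((1, w8 0 0 0 0 0 1 1 1) : Cls 8) ((a, f) : Cls 8)).1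
        = a + (a - (f 5 + f 6 + f 7)) * 1 := by
      show a + ip ((a, f) : Cls 8) ((1, w8 0 0 0 0 0 1 1 1) : Cls 8) * 1 = _
      rw [hipMv]
    have hM'nonneg := mo_a_nonneg hM'
    exact IH _ (by rw [hM'a] at hM'nonneg ⊢; omega) _ hM' rfl

lemma ipKK : ip (Kcls 8) (Kcls 8) = 1 := by
  rw [ipK]; simp [Kcls, Fin.sum_univ_eight]

set_option maxHeartbeats 1000000 in
/-- For a (−1)-class L and (−1)-classes λ₁, λ₂, λ₃ with
λ₁ + λ₂ + λ₃ = −2K + L, the multiset {λ₁·L, λ₂·L, λ₃·L} is one of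
{3,−1,−1}, {2,0,−1}, {1,1,−1}, {1,0,0}; conversely each of these four
multisets is attained. -/
theorem stmt13 :
    (∀ L l₁ l₂ l₃ : Cls 8, IsMinusOne L →
      IsMinusOne l₁ → IsMinusOne l₂ → IsMinusOne l₃ →
      l₁ + l₂ + l₃ = (-2 : ℤ) • Kcls 8 + L →
      ({ip l₁ L, ip l₂ L, ip l₃ L} : Multiset ℤ) ∈ tripleTargets) ∧
    (∀ L : Cls 8, IsMinusOne L → ∀ m ∈ tripleTargets,
      ∃ l₁ l₂ l₃ : Cls 8, IsMinusOne l₁ ∧ IsMinusOne l₂ ∧ IsMinusOne l₃ ∧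
        l₁ + l₂ + l₃ = (-2 : ℤ) • Kcls 8 + L ∧
        ({ip l₁ L, ip l₂ L, ip l₃ L} : Multiset ℤ) = m) := by
  constructor
  · intro L l₁ l₂ l₃ hL h1 h2 h3 hsum
    have e := congrArg (fun x : Cls 8 => ip x L) hsum
    simp only [ip_add_left, ip_smul_left] at e
    rw [hL.1, hL.2] at e
    have hb1 := mo_pair_le h1 hL
    have hb2 := mo_pair_le h2 hL
    have hb3 := mo_pair_le h3 hL
    obtain ⟨d1, hd1⟩ : ∃ d, ip l₁ L = d := ⟨_, rfl⟩
    obtain ⟨d2, hd2⟩ : ∃ d, ip l₂ L = d := ⟨_, rfl⟩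
    obtain ⟨d3, hd3⟩ : ∃ d, ip l₃ L = d := ⟨_, rfl⟩
    rw [hd1, hd2, hd3] at e ⊢
    rw [hd1] at hb1; rw [hd2] at hb2; rw [hd3] at hb3
    have u1 : d1 ≤ 3 := by linarith
    have u2 : d2 ≤ 3 := by linarith
    have u3 : d3 ≤ 3 := by linarith
    have hsum' : d1 + d2 + d3 = 1 := by linarith
    clear e hd1 hd2 hd3 hsum hL h1 h2 h3
    interval_cases d1 <;> interval_cases d2 <;> interval_cases d3 <;>
      first | (exfalso; omega) | decide
  · intro L hL m hm
    obtain ⟨u, s, hu, hs, huL, hsL, hus⟩ := hasUS_of_mo L hL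
    have hKK := ipKK
    have hKL := hL.2
    have hLK : ip L (Kcls 8) = -1 := by rw [ip_comm]; exact hL.2
    have hLL := hL.1
    have hKu := hu.2
    have huK : ip u (Kcls 8) = 0 := by rw [ip_comm]; exact hu.2
    have huu := hu.1
    have hKs := hs.2
    have hsK : ip s (Kcls 8) = 0 := by rw [ip_comm]; exact hs.2
    have hss := hs.1
    have hLu : ip L u = 0 := by rw [ip_comm]; exact huL
    have hLs : ip L s = 1 := by rw [ip_comm]; exact hsL
    have hsu : ip s u = 1 := by rw [ip_comm]; exact hus
    simp only [tripleTargets, List.mem_cons, List.mem_singleton, List.not_mem_nil,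
      or_false] at hm
    rcases hm with rfl | rfl | rfl | rfl
    · -- {3, -1, -1}
      refine ⟨(-2:ℤ) • Kcls 8 + (-1:ℤ) • L, L, L, ⟨?_, ?_⟩, hL, hL, ?_, ?_⟩
      · simp only [ip_add_left, ip_add_right, ip_smul_left, ip_smul_right,
          hKK, hKL, hLK, hLL]; norm_num
      · simp only [ip_add_right, ip_smul_right, hKK, hKL]; norm_num
      · module
      · have g1 : ip ((-2:ℤ) • Kcls 8 + (-1:ℤ) • L) L = 3 := by
          simp only [ip_add_left, ip_smul_left, hKL, hLL]; norm_num
        rw [g1, hLL]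
    · -- {2, 0, -1}
      refine ⟨(-1:ℤ) • Kcls 8 + s, (-1:ℤ) • Kcls 8 + (-1:ℤ) • s, L, ⟨?_, ?_⟩, ⟨?_, ?_⟩, hL, ?_, ?_⟩
      · simp only [ip_add_left, ip_add_right, ip_smul_left, ip_smul_right,
          hKK, hKs, hsK, hss]; norm_num
      · simp only [ip_add_right, ip_smul_right, hKK, hKs]; norm_num
      · simp only [ip_add_left, ip_add_right, ip_smul_left, ip_smul_right,
          hKK, hKs, hsK, hss]; norm_num
      · simp only [ip_add_right, ip_smul_right, hKK, hKs]; norm_num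
      · module
      · have g1 : ip ((-1:ℤ) • Kcls 8 + s) L = 2 := by
          simp only [ip_add_left, ip_smul_left, hKL, hsL]; norm_num
        have g2 : ip ((-1:ℤ) • Kcls 8 + (-1:ℤ) • s) L = 0 := by
          simp only [ip_add_left, ip_smul_left, hKL, hsL]; norm_num
        rw [g1, g2, hLL]
    · -- {1, 1, -1}
      refine ⟨(-1:ℤ) • Kcls 8 + u, (-1:ℤ) • Kcls 8 + (-1:ℤ) • u, L, ⟨?_, ?_⟩, ⟨?_, ?_⟩, hL, ?_, ?_⟩
      · simp only [ip_add_left, ip_add_right, ip_smul_left, ip_smul_right,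
          hKK, hKu, huK, huu]; norm_num
      · simp only [ip_add_right, ip_smul_right, hKK, hKu]; norm_num
      · simp only [ip_add_left, ip_add_right, ip_smul_left, ip_smul_right,
          hKK, hKu, huK, huu]; norm_num
      · simp only [ip_add_right, ip_smul_right, hKK, hKu]; norm_num
      · module
      · have g1 : ip ((-1:ℤ) • Kcls 8 + u) L = 1 := by
          simp only [ip_add_left, ip_smul_left, hKL, huL]; norm_num
        have g2 : ip ((-1:ℤ) • Kcls 8 + (-1:ℤ) • u) L = 1 := by
          simp only [ip_add_left, ip_smul_left, hKL, huL]; norm_num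
        rw [g1, g2, hLL]
    · -- {1, 0, 0}
      refine ⟨(-1:ℤ) • Kcls 8 + u, L + s, (-1:ℤ) • Kcls 8 + (-1:ℤ) • u + (-1:ℤ) • s,
        ⟨?_, ?_⟩, ⟨?_, ?_⟩, ⟨?_, ?_⟩, ?_, ?_⟩
      · simp only [ip_add_left, ip_add_right, ip_smul_left, ip_smul_right,
          hKK, hKu, huK, huu]; norm_num
      · simp only [ip_add_right, ip_smul_right, hKK, hKu]; norm_num
      · simp only [ip_add_left, ip_add_right, ip_smul_left, ip_smul_right,
          hLL, hLs, hsL, hss]; norm_num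
      · simp only [ip_add_right, ip_smul_right, hKL, hKs]; norm_num
      · simp only [ip_add_left, ip_add_right, ip_smul_left, ip_smul_right,
          hKK, hKu, huK, huu, hKs, hsK, hss, hus, hsu]; norm_num
      · simp only [ip_add_right, ip_smul_right, hKK, hKu, hKs]; norm_num
      · module
      · have g1 : ip ((-1:ℤ) • Kcls 8 + u) L = 1 := by
          simp only [ip_add_left, ip_smul_left, hKL, huL]; norm_num
        have g2 : ip (L + s) L = 0 := by
          simp only [ip_add_left, hLL, hsL]; norm_num
        have g3 : ip ((-1:ℤ) • Kcls 8 + (-1:ℤ) • u + (-1:ℤ) • s) L = 0 := by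
          simp only [ip_add_left, ip_smul_left, hKL, huL, hsL]; norm_num
        rw [g1, g2, g3]
end

section
/- Let 3 ≤ δ ≤ 8 and let Q₁, Q₂, Q₃ be conic classes in the del Pezzo lattice of rank 1+δ with Q_i·Q_j = 1 for all i ≠ j. Then there exists an element g of the Weyl group W_δ such that g(Q₁) = ℓ − e₁, g(Q₂) = ℓ − e₂, and g(Q₃) = ℓ − e₃. -/
namespace DPAux

variable {δ : ℕ}

lemma ip_comm (x y : Cls δ) : ip x y = ip y x := by
  unfold ip
  rw [mul_comm]
  congr 1
  exact Finset.sum_congr rfl fun i _ => mul_comm _ _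

lemma ip_add_left (x y z : Cls δ) : ip (x + y) z = ip x z + ip y z := by
  unfold ip
  simp only [Prod.fst_add, Prod.snd_add, Pi.add_apply, add_mul, Finset.sum_add_distrib]
  ring

lemma ip_add_right (x y z : Cls δ) : ip x (y + z) = ip x y + ip x z := by
  rw [ip_comm, ip_add_left, ip_comm y x, ip_comm z x]

lemma ip_smul_left (c : ℤ) (x z : Cls δ) : ip (c • x) z = c * ip x z := by
  unfold ip
  simp only [Prod.smul_fst, Prod.smul_snd, Pi.smul_apply, smul_eq_mul]
  rw [mul_sub, Finset.mul_sum]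
  congr 1
  · ring
  · exact Finset.sum_congr rfl fun i _ => by ring

lemma ip_smul_right (c : ℤ) (x z : Cls δ) : ip x (c • z) = c * ip x z := by
  rw [ip_comm, ip_smul_left, ip_comm]

lemma ip_K (x : Cls δ) : ip (Kcls δ) x = -3 * x.1 + ∑ i, x.2 i := by
  unfold ip Kcls
  simp only [neg_mul, one_mul, Finset.sum_neg_distrib]
  ring


/-- the reflection x ↦ x + (x·r) r as a linear map -/
def reflLin (r : Cls δ) : Cls δ →ₗ[ℤ] Cls δ where
  toFun x := x + ip x r • r
  map_add' x y := by
    rw [ip_add_left, add_smul]; abel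
  map_smul' c x := by
    simp only [RingHom.id_apply]
    rw [ip_smul_left, smul_add, mul_smul]

lemma reflLin_apply (r x : Cls δ) : reflLin r x = x + ip x r • r := rfl

lemma reflLin_invol (r : Cls δ) (hr : ip r r = -2) (x : Cls δ) :
    reflLin r (reflLin r x) = x := by
  rw [reflLin_apply, reflLin_apply, ip_add_left, ip_smul_left, hr]
  have h : ip x r + ip x r * -2 = -(ip x r) := by ring
  rw [h, neg_smul]
  abel

/-- the reflection as a linear equivalence -/
def reflEq (r : Cls δ) (hr : ip r r = -2) : Cls δ ≃ₗ[ℤ] Cls δ :=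
  LinearEquiv.ofLinear (reflLin r) (reflLin r)
    (LinearMap.ext fun x => reflLin_invol r hr x)
    (LinearMap.ext fun x => reflLin_invol r hr x)

lemma reflEq_apply (r : Cls δ) (hr : ip r r = -2) (x : Cls δ) :
    reflEq r hr x = x + ip x r • r := rfl

lemma reflEq_ip (r : Cls δ) (hr : ip r r = -2) (x y : Cls δ) :
    ip (reflEq r hr x) (reflEq r hr y) = ip x y := by
  rw [reflEq_apply, reflEq_apply, ip_add_left, ip_add_right, ip_add_right,
    ip_smul_left, ip_smul_right, ip_smul_right, ip_smul_left, hr, ip_comm r y]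
  ring

lemma reflEq_fix (r : Cls δ) (hr : ip r r = -2) (x : Cls δ) (hx : ip x r = 0) :
    reflEq r hr x = x := by
  rw [reflEq_apply, hx, zero_smul, add_zero]

lemma reflEq_weyl (r : Cls δ) (hr : ip r r = -2) (hK : ip (Kcls δ) r = 0) :
    IsWeyl (reflEq r hr) :=
  ⟨reflEq_ip r hr, reflEq_fix r hr _ hK⟩

lemma reflEq_fst (r : Cls δ) (hr : ip r r = -2) (x : Cls δ) :
    (reflEq r hr x).1 = x.1 + ip x r * r.1 := by
  rw [reflEq_apply]; simp [smul_eq_mul]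

/-- coordinate permutation as a linear equivalence -/
def permEq (σ : Equiv.Perm (Fin δ)) : Cls δ ≃ₗ[ℤ] Cls δ where
  toFun x := (x.1, x.2 ∘ σ)
  invFun x := (x.1, x.2 ∘ σ.symm)
  left_inv x := by
    cases x with
    | mk a b => simp [Function.comp_def]
  right_inv x := by
    cases x with
    | mk a b => simp [Function.comp_def]
  map_add' x y := rfl
  map_smul' c x := rfl

lemma permEq_apply (σ : Equiv.Perm (Fin δ)) (x : Cls δ) :
    permEq σ x = (x.1, x.2 ∘ σ) := rfl

lemma permEq_weyl (σ : Equiv.Perm (Fin δ)) : IsWeyl (permEq σ) := by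
  constructor
  · intro x y
    unfold ip
    simp only [permEq_apply, Function.comp_apply]
    congr 1
    exact Equiv.sum_comp σ (fun i => x.2 i * y.2 i)
  · rfl


/-- `rt a S` is the class `(a; 𝟙_S)`. -/
def rt (a : ℤ) (S : Finset (Fin δ)) : Cls δ := (a, fun t => if t ∈ S then 1 else 0)

lemma ip_rt_left (a : ℤ) (S : Finset (Fin δ)) (x : Cls δ) :
    ip (rt a S) x = a * x.1 - ∑ t ∈ S, x.2 t := by
  unfold ip rt
  congr 1
  simp only [ite_mul, one_mul, zero_mul]
  rw [Finset.sum_ite_mem, Finset.univ_inter]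

lemma ip_rt_right (a : ℤ) (S : Finset (Fin δ)) (x : Cls δ) :
    ip x (rt a S) = a * x.1 - ∑ t ∈ S, x.2 t := by
  rw [ip_comm, ip_rt_left]

lemma rt_sum (a : ℤ) (S : Finset (Fin δ)) : ∑ t ∈ S, (rt a S).2 t = S.card := by
  unfold rt
  rw [Finset.sum_congr rfl (fun t ht => if_pos ht)]
  simp

lemma ip_rt_self (a : ℤ) (S : Finset (Fin δ)) :
    ip (rt a S) (rt a S) = a * a - S.card := by
  rw [ip_rt_left, rt_sum]; rfl

lemma ip_K_rt (a : ℤ) (S : Finset (Fin δ)) :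
    ip (Kcls δ) (rt a S) = -3 * a + S.card := by
  rw [ip_comm, ip_rt_left]
  have h2 : ∑ t ∈ S, (Kcls δ).2 t = -(S.card : ℤ) := by
    unfold Kcls; simp
  rw [h2]
  unfold Kcls
  push_cast
  ring

lemma permEq_rt (σ : Equiv.Perm (Fin δ)) (a : ℤ) (p : Fin δ) :
    permEq σ (rt a {p}) = rt a {σ.symm p} := by
  rw [permEq_apply]
  unfold rt
  refine Prod.ext rfl ?_
  funext t
  simp only [Function.comp_apply, Finset.mem_singleton]
  by_cases h : t = σ.symm p
  · rw [if_pos h, if_pos (by rw [h]; exact σ.apply_symm_apply p)]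
  · rw [if_neg h, if_neg (fun hc => h (by rw [← hc]; exact (σ.symm_apply_apply t).symm))]

lemma weyl_trans {e f : Cls δ ≃ₗ[ℤ] Cls δ} (he : IsWeyl e) (hf : IsWeyl f) :
    IsWeyl (e.trans f) := by
  constructor
  · intro x y
    rw [LinearEquiv.trans_apply, LinearEquiv.trans_apply, hf.1, he.1]
  · rw [LinearEquiv.trans_apply, he.2, hf.2]

lemma weyl_conic {g : Cls δ ≃ₗ[ℤ] Cls δ} (hg : IsWeyl g) {Q : Cls δ}
    (hQ : IsConic Q) : IsConic (g Q) := by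
  constructor
  · rw [hg.1]; exact hQ.1
  · rw [← hg.2, hg.1]; exact hQ.2

lemma conic_sum {Q : Cls δ} (hQ : IsConic Q) : ∑ i, Q.2 i = 3 * Q.1 - 2 := by
  have h := hQ.2
  rw [ip_K] at h
  linarith

lemma conic_sq {Q : Cls δ} (hQ : IsConic Q) : ∑ i, Q.2 i * Q.2 i = Q.1 * Q.1 := by
  have h := hQ.1
  unfold ip at h
  linarith

lemma conic_pos (h2 : δ ≤ 8) {Q : Cls δ} (hQ : IsConic Q) : 1 ≤ Q.1 := by
  have cs := Finset.sum_mul_sq_le_sq_mul_sq Finset.univ Q.2 (fun _ => (1:ℤ))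
  simp only [mul_one, one_pow, Finset.sum_const, Finset.card_univ, Fintype.card_fin,
    nsmul_eq_mul] at cs
  have hsq : ∑ i, Q.2 i ^ 2 = Q.1 * Q.1 := by
    rw [← conic_sq hQ]
    exact Finset.sum_congr rfl fun i _ => sq (Q.2 i) ▸ by ring
  rw [hsq, conic_sum hQ] at cs
  have hd : (δ : ℤ) ≤ 8 := by exact_mod_cast h2
  nlinarith [cs]

lemma mul_self_sub_nonneg (c : ℤ) : 0 ≤ c * c - c := by
  rcases le_or_gt c 0 with h | h
  · nlinarith
  · nlinarith

lemma eq01 {c : ℤ} (h : c * c = c) : c = 0 ∨ c = 1 := by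
  have h2 : c * (c - 1) = 0 := by ring_nf; linarith [h]
  rcases mul_eq_zero.mp h2 with h3 | h3
  · exact Or.inl h3
  · right; linarith

lemma pos_spot {s : Finset (Fin δ)} {b : Fin δ → ℤ}
    (h01 : ∀ l ∈ s, b l = 0 ∨ b l = 1) (hs : 1 ≤ ∑ l ∈ s, b l) :
    ∃ p ∈ s, b p = 1 := by
  have h : ∑ l ∈ s, (0:ℤ) < ∑ l ∈ s, b l := by
    rw [Finset.sum_const, smul_zero]; linarith
  obtain ⟨p, hp, hbp⟩ := Finset.exists_lt_of_sum_lt h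
  refine ⟨p, hp, ?_⟩
  rcases h01 p hp with h' | h' <;> omega

lemma one_spot {s : Finset (Fin δ)} {b : Fin δ → ℤ}
    (h01 : ∀ l ∈ s, b l = 0 ∨ b l = 1) (hs : ∑ l ∈ s, b l = 1) :
    ∃ p ∈ s, b p = 1 ∧ ∀ l ∈ s, l ≠ p → b l = 0 := by
  obtain ⟨p, hp, hbp⟩ := pos_spot h01 (by omega)
  refine ⟨p, hp, hbp, ?_⟩
  have hsplit := Finset.sum_erase_add s b hp
  have hrest : ∑ l ∈ s.erase p, b l = 0 := by omega
  intro l hl hlp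
  exact (Finset.sum_eq_zero_iff_of_nonneg (fun l' hl' => by
      rcases h01 l' (Finset.mem_of_mem_erase hl') with h' | h' <;> omega)).mp hrest l
    (Finset.mem_erase.mpr ⟨hlp, hl⟩)

lemma sum_triple {i j k : Fin δ} (hij : i ≠ j) (hik : i ≠ k) (hjk : j ≠ k)
    (f : Fin δ → ℤ) : ∑ t ∈ ({i, j, k} : Finset (Fin δ)), f t = f i + f j + f k := by
  rw [Finset.sum_insert (by simp [hij, hik]), Finset.sum_insert (by simp [hjk]),
    Finset.sum_singleton]
  ring

lemma card_triple {i j k : Fin δ} (hij : i ≠ j) (hik : i ≠ k) (hjk : j ≠ k) :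
    ({i, j, k} : Finset (Fin δ)).card = 3 := by
  rw [Finset.card_insert_of_notMem (by simp [hij, hik]),
    Finset.card_insert_of_notMem (by simp [hjk]), Finset.card_singleton]


/-- Key lemma: find three coordinates whose sum exceeds `A`. -/
lemma key (h1 : 3 ≤ δ) (h2 : δ ≤ 8) {A : ℤ} (hA : 2 ≤ A) (b : Fin δ → ℤ)
    (hsum : ∑ i, b i = 3 * A - 2) (hsq : ∑ i, b i * b i = A * A) :
    ∃ i j k : Fin δ, i ≠ j ∧ i ≠ k ∧ j ≠ k ∧ A + 1 ≤ b i + b j + b k := by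
  have hcard : (Finset.univ : Finset (Fin δ)).card = δ := by simp
  -- pick top three coordinates
  obtain ⟨i, -, hi⟩ := Finset.exists_max_image Finset.univ b
    ⟨⟨0, by omega⟩, Finset.mem_univ _⟩
  have hne1 : (Finset.univ.erase i).Nonempty := by
    rw [← Finset.card_pos, Finset.card_erase_of_mem (Finset.mem_univ i), hcard]
    omega
  obtain ⟨j, hjm, hj⟩ := Finset.exists_max_image _ b hne1
  have hij : i ≠ j := fun h => (Finset.mem_erase.mp hjm).1 h.symm
  have hne2 : ((Finset.univ.erase i).erase j).Nonempty := by
    rw [← Finset.card_pos, Finset.card_erase_of_mem hjm,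
      Finset.card_erase_of_mem (Finset.mem_univ i), hcard]
    omega
  obtain ⟨k, hkm, hk⟩ := Finset.exists_max_image _ b hne2
  have hjk : j ≠ k := fun h => (Finset.mem_erase.mp hkm).1 h.symm
  have hik : i ≠ k := fun h => (Finset.mem_erase.mp (Finset.mem_of_mem_erase hkm)).1 h.symm
  refine ⟨i, j, k, hij, hik, hjk, ?_⟩
  by_contra hcon
  push_neg at hcon
  have hs_le : b i + b j + b k ≤ A := by omega
  -- ordering facts
  have hbji : b j ≤ b i := hi j (Finset.mem_univ j)
  have hbkj : b k ≤ b j := hj k (Finset.mem_of_mem_erase hkm)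
  have hrest : ∀ l, l ≠ i → l ≠ j → l ≠ k → b l ≤ b k := by
    intro l hli hlj hlk
    exact hk l (Finset.mem_erase.mpr ⟨hlj, Finset.mem_erase.mpr ⟨hli, Finset.mem_univ l⟩⟩)
  -- split sums
  set T : Finset (Fin δ) := {i, j, k} with hT
  have hTsub : T ⊆ Finset.univ := Finset.subset_univ T
  have hTcard : T.card = 3 := by
    rw [hT, Finset.card_insert_of_notMem (by simp [hij, hik]),
      Finset.card_insert_of_notMem (by simp [hjk]), Finset.card_singleton]
  set R : Finset (Fin δ) := Finset.univ \ T with hR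
  have hmemR : ∀ l ∈ R, l ≠ i ∧ l ≠ j ∧ l ≠ k := by
    intro l hl
    rw [hR, Finset.mem_sdiff, hT] at hl
    have := hl.2
    simp only [Finset.mem_insert, Finset.mem_singleton] at this
    push_neg at this
    exact this
  have hsumT : ∑ t ∈ T, b t = b i + b j + b k := by
    rw [hT, Finset.sum_insert (by simp [hij, hik]), Finset.sum_insert (by simp [hjk]),
      Finset.sum_singleton]; ring
  have hsqT : ∑ t ∈ T, b t * b t = b i * b i + b j * b j + b k * b k := by
    rw [hT, Finset.sum_insert (by simp [hij, hik]), Finset.sum_insert (by simp [hjk]),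
      Finset.sum_singleton]; ring
  have hsplit := Finset.sum_sdiff (f := b) hTsub
  have hsplitsq := Finset.sum_sdiff (f := fun t => b t * b t) hTsub
  rw [hsum, hsumT, ← hR] at hsplit
  rw [hsq, hsqT, ← hR] at hsplitsq
  have hsplitsq' : (∑ l ∈ R, (b l * b l)) + (b i * b i + b j * b j + b k * b k) = A * A :=
    hsplitsq
  clear hsplitsq
  have hcardR : R.card = δ - 3 := by
    rw [hR, Finset.card_sdiff_of_subset hTsub, hcard, hTcard]
  have hdR : (R.card : ℤ) ≤ 5 := by
    have : R.card ≤ 5 := by omega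
    exact_mod_cast this
  have hdRb : ∑ l ∈ R, b l ≤ (R.card : ℤ) * b k := by
    have := Finset.sum_le_card_nsmul R b (b k)
      (fun l hl => (hrest l (hmemR l hl).1 (hmemR l hl).2.1 (hmemR l hl).2.2))
    rw [nsmul_eq_mul] at this
    exact this
  -- b k ≥ 1
  have hm1 : 1 ≤ b k := by
    by_contra hm
    push_neg at hm
    have h0 : (R.card : ℤ) * b k ≤ 0 :=
      mul_nonpos_of_nonneg_of_nonpos (by positivity) (by omega)
    omega
  have h5m : (R.card : ℤ) * b k ≤ 5 * b k :=
    mul_le_mul_of_nonneg_right hdR (by omega)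
  -- chain: 3A - 2 - s ≤ 5 * b k ; 3 b k ≤ s ≤ A  ⇒  b k ≤ 2
  have hm2 : b k ≤ 2 := by omega
  have hcases : b k = 1 ∨ b k = 2 := by omega
  rcases hcases with hbk | hbk
  · -- b k = 1 : forces A = 3, top three = (1,1,1)
    have hA3 : A = 3 := by omega
    have hbj1 : b j = 1 := by omega
    have hbi1 : b i = 1 := by omega
    have hRs : ∑ l ∈ R, b l = 4 := by omega
    have hsq3 : b i * b i + b j * b j + b k * b k = 3 := by rw [hbi1, hbj1, hbk]; ring
    have hAA : A * A = 9 := by rw [hA3]; ring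
    have hRsq : ∑ l ∈ R, b l * b l = 6 := by omega
    have hub : ∀ l ∈ R, b l ≤ 1 := by
      intro l hl
      have := hrest l (hmemR l hl).1 (hmemR l hl).2.1 (hmemR l hl).2.2
      omega
    have hones : ∑ l ∈ R, (1 - b l) = (R.card : ℤ) - 4 := by
      rw [Finset.sum_sub_distrib, Finset.sum_const, hRs, nsmul_eq_mul, mul_one]
    have hlow : ∀ l ∈ R, 0 ≤ b l := by
      intro l hl
      have hle : (1 : ℤ) - b l ≤ ∑ l ∈ R, (1 - b l) :=
        Finset.single_le_sum (f := fun l => 1 - b l)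
          (fun l' hl' => by
            have := hub l' hl'
            show (0:ℤ) ≤ 1 - b l'
            omega) hl
      omega
    have h01 : ∀ l ∈ R, b l * b l = b l := by
      intro l hl
      have h := hub l hl
      have h' := hlow l hl
      have : b l = 0 ∨ b l = 1 := by omega
      rcases this with h'' | h'' <;> rw [h''] <;> ring
    have hfin : (6:ℤ) = 4 := by
      rw [← hRsq, ← hRs]
      exact Finset.sum_congr rfl h01
    exact absurd hfin (by norm_num)
  · -- b k = 2 : forces A = 6, top three = (2,2,2)
    have hA6 : A = 6 := by omega
    have hbj2 : b j = 2 := by omega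
    have hbi2 : b i = 2 := by omega
    have hRs : ∑ l ∈ R, b l = 10 := by omega
    have hsq12 : b i * b i + b j * b j + b k * b k = 12 := by rw [hbi2, hbj2, hbk]; ring
    have hAA : A * A = 36 := by rw [hA6]; ring
    have hRsq : ∑ l ∈ R, b l * b l = 24 := by omega
    have hub : ∀ l ∈ R, b l ≤ 2 := by
      intro l hl
      have := hrest l (hmemR l hl).1 (hmemR l hl).2.1 (hmemR l hl).2.2
      omega
    have htwos : ∑ l ∈ R, (2 - b l) = 2 * (R.card : ℤ) - 10 := by
      rw [Finset.sum_sub_distrib, Finset.sum_const, hRs, nsmul_eq_mul, mul_comm]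
    have hnn : (0:ℤ) ≤ ∑ l ∈ R, (2 - b l) :=
      Finset.sum_nonneg (fun l hl => by have := hub l hl; omega)
    have hzsum : ∑ l ∈ R, (2 - b l) = 0 := by omega
    have hz : ∀ l ∈ R, 2 - b l = 0 :=
      (Finset.sum_eq_zero_iff_of_nonneg (fun l hl => by
        have := hub l hl
        show (0:ℤ) ≤ 2 - b l
        omega)).mp hzsum
    have hall2 : ∀ l ∈ R, b l * b l = 4 := by
      intro l hl
      have := hz l hl
      have hb : b l = 2 := by omega
      rw [hb]; ring
    have hconst : ∑ l ∈ R, (b l * b l) = ∑ l ∈ R, (4:ℤ) := Finset.sum_congr rfl hall2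
    rw [Finset.sum_const, nsmul_eq_mul] at hconst
    omega


/-- convenient root facts -/
lemma root_sq {i j k : Fin δ} (hij : i ≠ j) (hik : i ≠ k) (hjk : j ≠ k) :
    ip (rt 1 ({i,j,k} : Finset (Fin δ))) (rt 1 ({i,j,k} : Finset (Fin δ))) = -2 := by
  rw [ip_rt_self, card_triple hij hik hjk]
  norm_num

lemma root_K {i j k : Fin δ} (hij : i ≠ j) (hik : i ≠ k) (hjk : j ≠ k) :
    ip (Kcls δ) (rt 1 ({i,j,k} : Finset (Fin δ))) = 0 := by
  rw [ip_K_rt, card_triple hij hik hjk]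
  norm_num

lemma ip_single (u : Fin δ) (x : Cls δ) : ip (rt 1 {u}) x = x.1 - x.2 u := by
  rw [ip_rt_left, Finset.sum_singleton, one_mul]

lemma ip_single_rt {u : Fin δ} {S : Finset (Fin δ)} (h : u ∈ S) (a : ℤ) :
    ip (rt 1 {u}) (rt a S) = a - 1 := by
  rw [ip_single]
  unfold rt
  simp [h]

/-- ML1 : any conic can be moved to `rt 1 {u}` -/
lemma ML1 (h1 : 3 ≤ δ) (h2 : δ ≤ 8) (u : Fin δ) :
    ∀ n : ℕ, ∀ Q : Cls δ, IsConic Q → Q.1 ≤ (n : ℤ) →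
    ∃ g : Cls δ ≃ₗ[ℤ] Cls δ, IsWeyl g ∧ g Q = rt 1 {u} := by
  intro n
  induction n with
  | zero =>
    intro Q hQ hle
    have := conic_pos h2 hQ
    exact absurd hle (by push_cast; omega)
  | succ n IH =>
    intro Q hQ hle
    have hA1 : 1 ≤ Q.1 := conic_pos h2 hQ
    have hsum := conic_sum hQ
    have hsq := conic_sq hQ
    rcases eq_or_lt_of_le hA1 with hA | hA
    · -- base case : Q.1 = 1
      have hzero : ∑ l, (Q.2 l * Q.2 l - Q.2 l) = 0 := by
        rw [Finset.sum_sub_distrib, hsq, hsum, ← hA]; ring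
      have hz := (Finset.sum_eq_zero_iff_of_nonneg
        (fun l _ => mul_self_sub_nonneg (Q.2 l))).mp hzero
      have h01 : ∀ l ∈ Finset.univ, Q.2 l = 0 ∨ Q.2 l = 1 := by
        intro l hl
        have h := hz l hl
        exact eq01 (by omega)
      have hsum1 : ∑ l, Q.2 l = 1 := by rw [hsum, ← hA]; ring
      obtain ⟨p, -, hp1, hp0⟩ := one_spot h01 hsum1
      have hQeq : Q = rt 1 {p} := by
        refine Prod.ext hA.symm ?_
        funext l
        show Q.2 l = if l ∈ ({p} : Finset (Fin δ)) then 1 else 0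
        by_cases h : l = p
        · rw [h, if_pos (Finset.mem_singleton_self p)]; exact hp1
        · rw [if_neg (by simpa using h)]; exact hp0 l (Finset.mem_univ l) h
      refine ⟨permEq (Equiv.swap u p), permEq_weyl _, ?_⟩
      rw [hQeq, permEq_rt]
      congr 2
      rw [Equiv.symm_swap, Equiv.swap_apply_right]
    · -- inductive step : Q.1 ≥ 2
      obtain ⟨i, j, k, hij, hik, hjk, hbig⟩ := key h1 h2 hA Q.2 hsum hsq
      have hr2 := root_sq hij hik hjk
      have hKr := root_K hij hik hjk
      set r : Cls δ := rt 1 ({i,j,k} : Finset (Fin δ)) with hrdef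
      have hQr : ip Q r = Q.1 - (Q.2 i + Q.2 j + Q.2 k) := by
        rw [hrdef, ip_rt_right, sum_triple hij hik hjk, one_mul]
      have hwr := reflEq_weyl r hr2 hKr
      have hconic' : IsConic (reflEq r hr2 Q) := weyl_conic hwr hQ
      have hle' : (reflEq r hr2 Q).1 ≤ (n : ℤ) := by
        rw [reflEq_fst]
        have hr1 : r.1 = 1 := rfl
        rw [hr1, hQr]
        push_cast at hle ⊢
        omega
      obtain ⟨g', hg', hgQ⟩ := IH (reflEq r hr2 Q) hconic' hle'
      exact ⟨(reflEq r hr2).trans g', weyl_trans hwr hg',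
        by rw [LinearEquiv.trans_apply, hgQ]⟩

/-- ML2 : a conic meeting `rt 1 {u}` once can be moved to `rt 1 {v}` fixing `rt 1 {u}` -/
lemma ML2 (h2 : δ ≤ 8) (u v : Fin δ) (huv : u ≠ v) :
    ∀ n : ℕ, ∀ Q : Cls δ, IsConic Q → ip (rt 1 {u}) Q = 1 → Q.1 ≤ (n : ℤ) →
    ∃ g : Cls δ ≃ₗ[ℤ] Cls δ, IsWeyl g ∧ g (rt 1 {u}) = rt 1 {u} ∧ g Q = rt 1 {v} := by
  intro n
  induction n with
  | zero =>
    intro Q hQ _ hle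
    have := conic_pos h2 hQ
    exact absurd hle (by push_cast; omega)
  | succ n IH =>
    intro Q hQ hipu hle
    have hA1 : 1 ≤ Q.1 := conic_pos h2 hQ
    have hsum := conic_sum hQ
    have hsq := conic_sq hQ
    have hbu : Q.2 u = Q.1 - 1 := by
      rw [ip_single] at hipu
      omega
    set S : Finset (Fin δ) := Finset.univ.erase u with hSdef
    have hsplit := Finset.sum_erase_add Finset.univ Q.2 (Finset.mem_univ u)
    have hsplitsq := Finset.sum_erase_add Finset.univ (fun l => Q.2 l * Q.2 l)
      (Finset.mem_univ u)
    have hSsum : ∑ l ∈ S, Q.2 l = 2 * Q.1 - 1 := by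
      rw [hSdef]
      omega
    have hbusq : Q.2 u * Q.2 u = Q.1 * Q.1 - 2 * Q.1 + 1 := by rw [hbu]; ring
    have hsq2 : (∑ l ∈ Finset.univ.erase u, Q.2 l * Q.2 l) + Q.2 u * Q.2 u
        = ∑ l, Q.2 l * Q.2 l := hsplitsq
    have hSsq : ∑ l ∈ S, Q.2 l * Q.2 l = 2 * Q.1 - 1 := by
      rw [hSdef]
      omega
    have hzero : ∑ l ∈ S, (Q.2 l * Q.2 l - Q.2 l) = 0 := by
      rw [Finset.sum_sub_distrib, hSsum, hSsq]; ring
    have hz := (Finset.sum_eq_zero_iff_of_nonneg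
      (fun l _ => mul_self_sub_nonneg (Q.2 l))).mp hzero
    have h01 : ∀ l ∈ S, Q.2 l = 0 ∨ Q.2 l = 1 := by
      intro l hl
      have h := hz l hl
      exact eq01 (by omega)
    rcases eq_or_lt_of_le hA1 with hA | hA
    · -- base case : Q.1 = 1
      have hsum1 : ∑ l ∈ S, Q.2 l = 1 := by omega
      obtain ⟨p, hpS, hp1, hp0⟩ := one_spot h01 hsum1
      have hpu : p ≠ u := (Finset.mem_erase.mp hpS).1
      have hQeq : Q = rt 1 {p} := by
        refine Prod.ext hA.symm ?_
        funext l
        show Q.2 l = if l ∈ ({p} : Finset (Fin δ)) then 1 else 0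
        by_cases h : l = p
        · rw [h, if_pos (Finset.mem_singleton_self p)]; exact hp1
        · rw [if_neg (by simpa using h)]
          by_cases h' : l = u
          · rw [h', hbu, ← hA]; ring
          · exact hp0 l (Finset.mem_erase.mpr ⟨h', Finset.mem_univ l⟩) h
      refine ⟨permEq (Equiv.swap v p), permEq_weyl _, ?_, ?_⟩
      · rw [permEq_rt]
        congr 2
        rw [Equiv.symm_swap]
        exact Equiv.swap_apply_of_ne_of_ne huv hpu.symm
      · rw [hQeq, permEq_rt]
        congr 2
        rw [Equiv.symm_swap, Equiv.swap_apply_right]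
    · -- step : Q.1 ≥ 2, find two ones among S
      obtain ⟨p, hpS, hp1⟩ := pos_spot h01 (by omega)
      have hsplit2 := Finset.sum_erase_add S Q.2 hpS
      obtain ⟨q, hqS', hq1⟩ := pos_spot
        (fun l hl => h01 l (Finset.mem_of_mem_erase hl)) (s := S.erase p)
        (by omega)
      have hqS : q ∈ S := Finset.mem_of_mem_erase hqS'
      have hpu : p ≠ u := (Finset.mem_erase.mp hpS).1
      have hqu : q ≠ u := (Finset.mem_erase.mp hqS).1
      have hqp : q ≠ p := (Finset.mem_erase.mp hqS').1
      have hup : u ≠ p := hpu.symm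
      have huq : u ≠ q := hqu.symm
      have hpq : p ≠ q := hqp.symm
      have hr2 := root_sq hup huq hpq
      have hKr := root_K hup huq hpq
      set r : Cls δ := rt 1 ({u,p,q} : Finset (Fin δ)) with hrdef
      have hQr : ip Q r = -1 := by
        rw [hrdef, ip_rt_right, sum_triple hup huq hpq, one_mul, hbu, hp1, hq1]
        ring
      have hur : ip (rt 1 {u}) r = 0 := by
        rw [hrdef, ip_single]
        have h1 : (rt 1 ({u,p,q} : Finset (Fin δ))).1 = 1 := rfl
        have h2' : (rt 1 ({u,p,q} : Finset (Fin δ))).2 u = 1 := by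
          show (if u ∈ ({u,p,q} : Finset (Fin δ)) then (1:ℤ) else 0) = 1
          rw [if_pos (by simp)]
        rw [h1, h2']
        ring
      have hwr := reflEq_weyl r hr2 hKr
      have hfix : reflEq r hr2 (rt 1 {u}) = rt 1 {u} := reflEq_fix r hr2 _ hur
      have hconic' : IsConic (reflEq r hr2 Q) := weyl_conic hwr hQ
      have hip' : ip (rt 1 {u}) (reflEq r hr2 Q) = 1 := by
        rw [← hfix, reflEq_ip]
        exact hipu
      have hle' : (reflEq r hr2 Q).1 ≤ (n : ℤ) := by
        rw [reflEq_fst]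
        have hr1 : r.1 = 1 := rfl
        rw [hr1, hQr]
        push_cast at hle ⊢
        omega
      obtain ⟨g', hg', hgu, hgQ⟩ := IH (reflEq r hr2 Q) hconic' hip' hle'
      refine ⟨(reflEq r hr2).trans g', weyl_trans hwr hg', ?_, ?_⟩
      · rw [LinearEquiv.trans_apply, hfix, hgu]
      · rw [LinearEquiv.trans_apply, hgQ]

/-- ML3 : a conic meeting `rt 1 {u}` and `rt 1 {v}` once each moves to `rt 1 {w}`,
fixing both. -/
lemma ML3 (h2 : δ ≤ 8) (u v w : Fin δ) (huv : u ≠ v) (huw : u ≠ w) (hvw : v ≠ w) :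
    ∀ n : ℕ, ∀ Q : Cls δ, IsConic Q → ip (rt 1 {u}) Q = 1 → ip (rt 1 {v}) Q = 1 →
    Q.1 ≤ (n : ℤ) →
    ∃ g : Cls δ ≃ₗ[ℤ] Cls δ, IsWeyl g ∧ g (rt 1 {u}) = rt 1 {u} ∧
      g (rt 1 {v}) = rt 1 {v} ∧ g Q = rt 1 {w} := by
  intro n
  induction n with
  | zero =>
    intro Q hQ _ _ hle
    have := conic_pos h2 hQ
    exact absurd hle (by push_cast; omega)
  | succ n IH =>
    intro Q hQ hipu hipv hle
    have hA1 : 1 ≤ Q.1 := conic_pos h2 hQ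
    have hsum := conic_sum hQ
    have hsq := conic_sq hQ
    have hbu : Q.2 u = Q.1 - 1 := by rw [ip_single] at hipu; omega
    have hbv : Q.2 v = Q.1 - 1 := by rw [ip_single] at hipv; omega
    set S : Finset (Fin δ) := (Finset.univ.erase u).erase v with hSdef
    have hvm : v ∈ Finset.univ.erase u := Finset.mem_erase.mpr ⟨huv.symm, Finset.mem_univ v⟩
    have hsplit1 := Finset.sum_erase_add Finset.univ Q.2 (Finset.mem_univ u)
    have hsplit2 := Finset.sum_erase_add (Finset.univ.erase u) Q.2 hvm
    have hsplitsq1 := Finset.sum_erase_add Finset.univ (fun l => Q.2 l * Q.2 l)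
      (Finset.mem_univ u)
    have hsplitsq2 := Finset.sum_erase_add (Finset.univ.erase u) (fun l => Q.2 l * Q.2 l) hvm
    have hbusq : Q.2 u * Q.2 u = Q.1 * Q.1 - 2 * Q.1 + 1 := by rw [hbu]; ring
    have hbvsq : Q.2 v * Q.2 v = Q.1 * Q.1 - 2 * Q.1 + 1 := by rw [hbv]; ring
    have hSsum : ∑ l ∈ S, Q.2 l = Q.1 := by rw [hSdef]; omega
    have hsq1 : (∑ l ∈ Finset.univ.erase u, Q.2 l * Q.2 l) + Q.2 u * Q.2 u
        = ∑ l, Q.2 l * Q.2 l := hsplitsq1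
    have hsq2 : (∑ l ∈ (Finset.univ.erase u).erase v, Q.2 l * Q.2 l) + Q.2 v * Q.2 v
        = ∑ l ∈ Finset.univ.erase u, Q.2 l * Q.2 l := hsplitsq2
    have hSsq : ∑ l ∈ S, Q.2 l * Q.2 l = -(Q.1 * Q.1) + 4 * Q.1 - 2 := by
      rw [hSdef]
      omega
    have hnn : (0:ℤ) ≤ ∑ l ∈ S, (Q.2 l * Q.2 l - Q.2 l) :=
      Finset.sum_nonneg (fun l _ => mul_self_sub_nonneg (Q.2 l))
    have hcomp : ∑ l ∈ S, (Q.2 l * Q.2 l - Q.2 l)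
        = -(Q.1 * Q.1) + 3 * Q.1 - 2 := by
      rw [Finset.sum_sub_distrib, hSsum, hSsq]; ring
    have hA2 : Q.1 ≤ 2 := by
      by_contra hA3
      push_neg at hA3
      have : 2 ≤ (Q.1 - 1) * (Q.1 - 2) := by nlinarith
      nlinarith
    have hzero : ∑ l ∈ S, (Q.2 l * Q.2 l - Q.2 l) = 0 := by
      have h12 : Q.1 = 1 ∨ Q.1 = 2 := by omega
      rcases h12 with h | h <;> rw [hcomp, h] <;> ring
    have hz := (Finset.sum_eq_zero_iff_of_nonneg
      (fun l _ => mul_self_sub_nonneg (Q.2 l))).mp hzero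
    have h01 : ∀ l ∈ S, Q.2 l = 0 ∨ Q.2 l = 1 := by
      intro l hl
      have h := hz l hl
      exact eq01 (by omega)
    rcases eq_or_lt_of_le hA1 with hA | hA
    · -- base case : Q.1 = 1
      have hsum1 : ∑ l ∈ S, Q.2 l = 1 := by omega
      obtain ⟨p, hpS, hp1, hp0⟩ := one_spot h01 hsum1
      have hpv : p ≠ v := (Finset.mem_erase.mp hpS).1
      have hpu : p ≠ u := (Finset.mem_erase.mp (Finset.mem_of_mem_erase hpS)).1
      have hQeq : Q = rt 1 {p} := by
        refine Prod.ext hA.symm ?_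
        funext l
        show Q.2 l = if l ∈ ({p} : Finset (Fin δ)) then 1 else 0
        by_cases h : l = p
        · rw [h, if_pos (Finset.mem_singleton_self p)]; exact hp1
        · rw [if_neg (by simpa using h)]
          by_cases h' : l = u
          · rw [h', hbu, ← hA]; ring
          · by_cases h'' : l = v
            · rw [h'', hbv, ← hA]; ring
            · exact hp0 l (Finset.mem_erase.mpr ⟨h'',
                Finset.mem_erase.mpr ⟨h', Finset.mem_univ l⟩⟩) h
      refine ⟨permEq (Equiv.swap w p), permEq_weyl _, ?_, ?_, ?_⟩
      · rw [permEq_rt]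
        congr 2
        rw [Equiv.symm_swap]
        exact Equiv.swap_apply_of_ne_of_ne huw hpu.symm
      · rw [permEq_rt]
        congr 2
        rw [Equiv.symm_swap]
        exact Equiv.swap_apply_of_ne_of_ne hvw hpv.symm
      · rw [hQeq, permEq_rt]
        congr 2
        rw [Equiv.symm_swap, Equiv.swap_apply_right]
    · -- step : Q.1 = 2
      have hAeq : Q.1 = 2 := by omega
      obtain ⟨p, hpS, hp1⟩ := pos_spot h01 (by omega)
      have hpv : p ≠ v := (Finset.mem_erase.mp hpS).1
      have hpu : p ≠ u := (Finset.mem_erase.mp (Finset.mem_of_mem_erase hpS)).1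
      have hup : u ≠ p := hpu.symm
      have hvp : v ≠ p := hpv.symm
      have hr2 := root_sq huv hup hvp
      have hKr := root_K huv hup hvp
      set r : Cls δ := rt 1 ({u,v,p} : Finset (Fin δ)) with hrdef
      have hQr : ip Q r = -1 := by
        rw [hrdef, ip_rt_right, sum_triple huv hup hvp, one_mul, hbu, hbv, hp1, hAeq]
        ring
      have hur : ip (rt 1 {u}) r = 0 := by
        rw [hrdef, ip_single]
        have ha : (rt 1 ({u,v,p} : Finset (Fin δ))).1 = 1 := rfl
        have hb : (rt 1 ({u,v,p} : Finset (Fin δ))).2 u = 1 := by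
          show (if u ∈ ({u,v,p} : Finset (Fin δ)) then (1:ℤ) else 0) = 1
          rw [if_pos (by simp)]
        rw [ha, hb]; ring
      have hvr : ip (rt 1 {v}) r = 0 := by
        rw [hrdef, ip_single]
        have ha : (rt 1 ({u,v,p} : Finset (Fin δ))).1 = 1 := rfl
        have hb : (rt 1 ({u,v,p} : Finset (Fin δ))).2 v = 1 := by
          show (if v ∈ ({u,v,p} : Finset (Fin δ)) then (1:ℤ) else 0) = 1
          rw [if_pos (by simp)]
        rw [ha, hb]; ring
      have hwr := reflEq_weyl r hr2 hKr
      have hfixu : reflEq r hr2 (rt 1 {u}) = rt 1 {u} := reflEq_fix r hr2 _ hur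
      have hfixv : reflEq r hr2 (rt 1 {v}) = rt 1 {v} := reflEq_fix r hr2 _ hvr
      have hconic' : IsConic (reflEq r hr2 Q) := weyl_conic hwr hQ
      have hipu' : ip (rt 1 {u}) (reflEq r hr2 Q) = 1 := by
        rw [← hfixu, reflEq_ip]; exact hipu
      have hipv' : ip (rt 1 {v}) (reflEq r hr2 Q) = 1 := by
        rw [← hfixv, reflEq_ip]; exact hipv
      have hle' : (reflEq r hr2 Q).1 ≤ (n : ℤ) := by
        rw [reflEq_fst]
        have hr1 : r.1 = 1 := rfl
        rw [hr1, hQr]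
        push_cast at hle ⊢
        omega
      obtain ⟨g', hg', hgu, hgv, hgQ⟩ := IH (reflEq r hr2 Q) hconic' hipu' hipv' hle'
      refine ⟨(reflEq r hr2).trans g', weyl_trans hwr hg', ?_, ?_, ?_⟩
      · rw [LinearEquiv.trans_apply, hfixu, hgu]
      · rw [LinearEquiv.trans_apply, hfixv, hgv]
      · rw [LinearEquiv.trans_apply, hgQ]


lemma rt_single_eq {δ : ℕ} (m : ℕ) (hm : m < δ) :
    (rt 1 {(⟨m, hm⟩ : Fin δ)} : Cls δ)
      = ((1, fun j => if (j : ℕ) = m then 1 else 0) : Cls δ) := by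
  unfold rt
  refine Prod.ext rfl ?_
  funext j
  simp [Fin.ext_iff]

end DPAux

open DPAux in
theorem stmt17aux (δ : ℕ) (h1 : 3 ≤ δ) (h2 : δ ≤ 8) (Q₁ Q₂ Q₃ : Cls δ)
    (hQ₁ : IsConic Q₁) (hQ₂ : IsConic Q₂) (hQ₃ : IsConic Q₃)
    (h12 : ip Q₁ Q₂ = 1) (h13 : ip Q₁ Q₃ = 1) (h23 : ip Q₂ Q₃ = 1) :
    ∃ g : Cls δ ≃ₗ[ℤ] Cls δ, IsWeyl g ∧
      g Q₁ = ((1, fun j => if (j : ℕ) = 0 then 1 else 0) : Cls δ) ∧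
      g Q₂ = ((1, fun j => if (j : ℕ) = 1 then 1 else 0) : Cls δ) ∧
      g Q₃ = ((1, fun j => if (j : ℕ) = 2 then 1 else 0) : Cls δ) := by
  have hm0 : (0:ℕ) < δ := by omega
  have hm1 : (1:ℕ) < δ := by omega
  have hm2 : (2:ℕ) < δ := by omega
  set i0 : Fin δ := ⟨0, hm0⟩ with hi0
  set i1 : Fin δ := ⟨1, hm1⟩ with hi1
  set i2 : Fin δ := ⟨2, hm2⟩ with hi2
  have hd01 : i0 ≠ i1 := Fin.ne_of_val_ne (by norm_num)
  have hd02 : i0 ≠ i2 := Fin.ne_of_val_ne (by norm_num)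
  have hd12 : i1 ≠ i2 := Fin.ne_of_val_ne (by norm_num)
  obtain ⟨g₁, hg₁, hg₁Q⟩ := ML1 h1 h2 i0 Q₁.1.toNat Q₁ hQ₁ (by omega)
  have hc2 : IsConic (g₁ Q₂) := weyl_conic hg₁ hQ₂
  have hip12 : ip (rt 1 {i0}) (g₁ Q₂) = 1 := by
    rw [← hg₁Q, hg₁.1]; exact h12
  obtain ⟨g₂, hg₂, hg₂u, hg₂Q⟩ := ML2 h2 i0 i1 hd01 (g₁ Q₂).1.toNat _ hc2 hip12 (by omega)
  have hc3 : IsConic (g₂ (g₁ Q₃)) := weyl_conic hg₂ (weyl_conic hg₁ hQ₃)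
  have hipu3 : ip (rt 1 {i0}) (g₂ (g₁ Q₃)) = 1 := by
    rw [← hg₂u, hg₂.1, ← hg₁Q, hg₁.1]; exact h13
  have hipv3 : ip (rt 1 {i1}) (g₂ (g₁ Q₃)) = 1 := by
    rw [← hg₂Q, hg₂.1, hg₁.1]; exact h23
  obtain ⟨g₃, hg₃, hg₃u, hg₃v, hg₃Q⟩ := ML3 h2 i0 i1 i2 hd01 hd02 hd12
    (g₂ (g₁ Q₃)).1.toNat _ hc3 hipu3 hipv3 (by omega)
  refine ⟨(g₁.trans g₂).trans g₃, weyl_trans (weyl_trans hg₁ hg₂) hg₃, ?_, ?_, ?_⟩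
  · rw [LinearEquiv.trans_apply, LinearEquiv.trans_apply, hg₁Q, hg₂u, hg₃u,
      hi0, rt_single_eq]
  · rw [LinearEquiv.trans_apply, LinearEquiv.trans_apply, hg₂Q, hg₃v,
      hi1, rt_single_eq]
  · rw [LinearEquiv.trans_apply, LinearEquiv.trans_apply, hg₃Q,
      hi2, rt_single_eq]

/-- For 3 ≤ δ ≤ 8, three conic classes with pairwise intersection product 1
can simultaneously be carried by a Weyl-group element to
ℓ − e₁, ℓ − e₂, ℓ − e₃. -/
theorem stmt17 (δ : ℕ) (h1 : 3 ≤ δ) (h2 : δ ≤ 8) (Q₁ Q₂ Q₃ : Cls δ)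
    (hQ₁ : IsConic Q₁) (hQ₂ : IsConic Q₂) (hQ₃ : IsConic Q₃)
    (h12 : ip Q₁ Q₂ = 1) (h13 : ip Q₁ Q₃ = 1) (h23 : ip Q₂ Q₃ = 1) :
    ∃ g : Cls δ ≃ₗ[ℤ] Cls δ, IsWeyl g ∧
      g Q₁ = ((1, fun j => if (j : ℕ) = 0 then 1 else 0) : Cls δ) ∧
      g Q₂ = ((1, fun j => if (j : ℕ) = 1 then 1 else 0) : Cls δ) ∧
      g Q₃ = ((1, fun j => if (j : ℕ) = 2 then 1 else 0) : Cls δ) := by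
  classical
  open DPAux in
  exact stmt17aux δ h1 h2 Q₁ Q₂ Q₃ hQ₁ hQ₂ hQ₃ h12 h13 h23
end
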